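/- arXiv:0902.2258 — 6 statements merged into one kernel-verified Lean document; each statement's English description precedes it below -/
import Mathlib

section
/- Let L be a locally compact Hausdorff topological group, G a dense subgroup of L (so G is a locally precompact group), U an open subset of G, and τ an infinite cardinal such that U is τ-precompact in G. Then every cellular family in the subspace U (i.e., every family of pairwise disjoint nonempty open subsets of U) has cardinality at most τ. In other words, c(U) ≤ ip(U). -/
/-!
Fix a compact neighbourhood `K` of `1` in the completion `L` and cover `U` by at most `τ`
translates `s • interior K`, `s ∈ S ⊆ G`. By density of `G`, the cells extend to pairwise
disjoint open subsets of `L`. Each extended cell meets some translate, and the cells meeting a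
fixed translate cut it into disjoint open sets of positive Haar measure inside a set of finite
measure, so there are only countably many of them. Hence `|C| ≤ |S| · ℵ₀ ≤ τ`.
-/

open Set Topology Pointwise

universe u

/-- A subset `X` of a topological group `G` is `τ`-precompact if for every neighborhood `U`
of the identity there is `S ⊆ X` with `|S| ≤ τ` and `X ⊆ (S*U) ∩ (U*S)`. -/
def IsTauPrecompact {G : Type u} [Group G] [TopologicalSpace G] (τ : Cardinal.{u}) (X : Set G) : Prop :=
  ∀ U ∈ nhds (1 : G), ∃ S : Set G, S ⊆ X ∧ Cardinal.mk ↥S ≤ τ ∧ X ⊆ (S * U) ∩ (U * S)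

open MeasureTheory Cardinal Function

theorem Dense.exists_isOpen_preimage_pairwise_disjoint {X ι : Type*} [TopologicalSpace X]
    {s : Set X} (hs : Dense s) {A : ι → Set s} (hA : ∀ i, IsOpen (A i))
    (hd : Pairwise (Disjoint on A)) :
    ∃ O : ι → Set X, (∀ i, IsOpen (O i)) ∧ (∀ i, (↑) ⁻¹' O i = A i) ∧
      Pairwise (Disjoint on O) := by
  choose O hO hOA using fun i => isOpen_induced_iff.mp (hA i)
  refine ⟨O, hO, hOA, fun i j hij => disjoint_iff_inter_eq_empty.mpr ?_⟩
  by_contra hne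
  obtain ⟨x, ⟨hxi, hxj⟩, hxs⟩ :=
    hs.inter_open_nonempty _ ((hO i).inter (hO j)) (nonempty_iff_ne_empty.mpr hne)
  have hxi' : (⟨x, hxs⟩ : s) ∈ A i := hOA i ▸ hxi
  have hxj' : (⟨x, hxs⟩ : s) ∈ A j := hOA j ▸ hxj
  exact disjoint_left.mp (hd hij) hxi' hxj'

section Cellularity

variable {X : Type*} [TopologicalSpace X] [MeasurableSpace X] [OpensMeasurableSpace X]
  (μ : Measure X) [μ.IsOpenPosMeasure]

theorem countable_of_pairwise_disjoint_isOpen_subset_of_measure_ne_top {ι : Type*}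
    {A : ι → Set X} (hAo : ∀ i, IsOpen (A i)) (hAne : ∀ i, (A i).Nonempty)
    (hd : Pairwise (Disjoint on A)) {B : Set X} (hB : μ B ≠ ⊤) (hAB : ∀ i, A i ⊆ B) :
    Countable ι := by
  have hposCountable := Measure.countable_meas_pos_of_disjoint_of_meas_iUnion_ne_top μ
    (fun i => (hAo i).measurableSet) hd (ne_top_of_le_ne_top hB (measure_mono (iUnion_subset hAB)))
  exact countable_univ_iff.mp (hposCountable.mono fun i _ => (hAo i).measure_pos μ (hAne i))

theorem mk_le_mk_mul_aleph0_of_pairwise_disjoint_isOpen {ι J : Type u}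
    {O : ι → Set X} (hOo : ∀ i, IsOpen (O i)) (hd : Pairwise (Disjoint on O))
    {B : J → Set X} (hBo : ∀ j, IsOpen (B j)) (hB : ∀ j, μ (B j) ≠ ⊤)
    (hmeet : ∀ i, ∃ j, (O i ∩ B j).Nonempty) :
    #ι ≤ #J * ℵ₀ := by
  choose g hg using hmeet
  refine mk_le_mk_mul_of_mk_preimage_le g fun j => mk_le_aleph0_iff.mpr ?_
  exact countable_of_pairwise_disjoint_isOpen_subset_of_measure_ne_top μ
    (A := fun i : g ⁻¹' {j} => O i ∩ B j) (fun i => (hOo i).inter (hBo j))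
    (fun ⟨i, (hi : g i = j)⟩ => hi ▸ hg i)
    (fun i i' hii' => (hd (Subtype.coe_ne_coe.mpr hii')).mono inter_subset_left inter_subset_left)
    (hB j) fun _ => inter_subset_right

end Cellularity

theorem cellularity_le_precompactness_index_general
    {L : Type u} [Group L] [TopologicalSpace L] [IsTopologicalGroup L]
    [LocallyCompactSpace L]
    (G : Subgroup L) (hdense : Dense (G : Set L))
    (U : Set ↥G) (hUopen : IsOpen U)
    (τ : Cardinal.{u}) (hτ : Cardinal.aleph0 ≤ τ)
    (hpre : IsTauPrecompact τ U)
    (C : Set (Set ↥U))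
    (hopen : ∀ V ∈ C, IsOpen V) (hne : ∀ V ∈ C, V.Nonempty)
    (hdisj : C.PairwiseDisjoint id) :
    Cardinal.mk ↥C ≤ τ := by
  borelize L
  obtain ⟨K, hK, hK1⟩ := exists_compact_mem_nhds (1 : L)
  obtain ⟨S, -, hS, hUS⟩ := hpre (Subtype.val ⁻¹' interior K) <|
    continuous_subtype_val.continuousAt.preimage_mem_nhds (interior_mem_nhds.mpr hK1)
  obtain ⟨O, hOo, hOC, hOd⟩ := hdense.exists_isOpen_preimage_pairwise_disjoint
    (A := fun V : C => Subtype.val '' V.1) (fun V => hUopen.isOpenMap_subtype_val _ (hopen V V.2))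
    fun V V' hVV' =>
      (disjoint_image_iff Subtype.val_injective).mpr (hdisj V.2 V'.2 (Subtype.coe_ne_coe.mpr hVV'))
  have hmeet : ∀ V : C, ∃ s : S, (O V ∩ ((s : G) : L) • interior K).Nonempty := by
    intro V
    obtain ⟨x, hxV⟩ := hne V V.2
    obtain ⟨s, hs, w, hw, hswx⟩ := (hUS x.2).1
    refine ⟨⟨s, hs⟩, (x : G), ?_, ?_⟩
    · have hx : (x : G) ∈ Subtype.val '' V.1 := ⟨x, hxV, rfl⟩
      rwa [← hOC V] at hx
    · rw [← hswx]
      exact smul_mem_smul_set hw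
  calc #C ≤ #S * ℵ₀ := mk_le_mk_mul_aleph0_of_pairwise_disjoint_isOpen Measure.haar hOo hOd
        (fun s => isOpen_interior.smul _) (fun s => ((hK.smul _).measure_lt_top).ne |>
          ne_top_of_le_ne_top <| measure_mono <| smul_set_mono interior_subset)
        hmeet
      _ ≤ τ * τ := mul_le_mul' hS hτ
      _ = τ := mul_eq_self hτ

/-- If `G` is a dense subgroup of a locally compact Hausdorff group `L` (so `G` is locally
precompact), `U` is an open subset of `G`, and `U` is `τ`-precompact for an infinite cardinal
`τ`, then every cellular family (pairwise disjoint family of nonempty open sets) in the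
subspace `U` has cardinality at most `τ`; i.e., `c(U) ≤ ip(U)`. -/
theorem cellularity_le_precompactness_index
    {L : Type u} [Group L] [TopologicalSpace L] [IsTopologicalGroup L]
    [LocallyCompactSpace L] [T2Space L]
    (G : Subgroup L) (hdense : Dense (G : Set L))
    (U : Set ↥G) (hUopen : IsOpen U)
    (τ : Cardinal.{u}) (hτ : Cardinal.aleph0 ≤ τ)
    (hpre : IsTauPrecompact τ U)
    (C : Set (Set ↥U))
    (hopen : ∀ V ∈ C, IsOpen V) (hne : ∀ V ∈ C, V.Nonempty)
    (hdisj : C.PairwiseDisjoint id) :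
    Cardinal.mk ↥C ≤ τ :=
  cellularity_le_precompactness_index_general G hdense U hUopen τ hτ hpre C hopen hne hdisj
end

section
/- Let L be a locally compact Hausdorff topological group, G a dense subgroup of L, and U an open subset of G. If the closure of U in G is Dieudonné complete and U is τ-precompact for some infinite cardinal τ that is not Ulam-measurable (i.e., ip(U) < 𝔪), then the closure of U in G is realcompact. -/
open Set Topology Pointwise

universe u

/-- A space is realcompact if it admits a closed embedding into some power of `ℝ`. -/
def RealcompactSpace (X : Type u) [TopologicalSpace X] : Prop :=
  ∃ (ι : Type u) (f : X → ι → ℝ), Topology.IsClosedEmbedding f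

/-- A space is Dieudonné complete if it admits a closed embedding into a product of
metrizable spaces. -/
def DieudonneComplete (X : Type u) [TopologicalSpace X] : Prop :=
  ∃ (ι : Type u) (M : ι → Type u) (tM : ∀ i, TopologicalSpace (M i))
    (_ : ∀ i, @TopologicalSpace.MetrizableSpace (M i) (tM i))
    (f : X → ∀ i, M i),
    @Topology.IsClosedEmbedding X (∀ i, M i) _ (@Pi.topologicalSpace ι M tM) f

/-- A type carries an Ulam ultrafilter if it carries a nonprincipal countably complete
ultrafilter. -/
def CarriesUlamUltrafilter (α : Type u) : Prop :=
  ∃ f : Ultrafilter α, (∀ a : α, f ≠ pure a) ∧ CountableInterFilter (f : Filter α)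

/-- A cardinal is Ulam-measurable if some (equivalently, every) set of that cardinality
carries a nonprincipal countably complete (σ-complete) ultrafilter. -/
def Cardinal.IsUlamMeasurable (c : Cardinal.{u}) : Prop :=
  ∃ α : Type u, Cardinal.mk α = c ∧ CarriesUlamUltrafilter α

/-!
Cellularity is the bridge between the two hypotheses. By a Haar measure argument only countably
many members of a disjoint open family in `L` meet a translate of a relatively compact
neighbourhood of `1`; covering `U` by `τ` such translates bounds the cellularity of `U`, hence of
its closure and of every continuous image of the closure, by `τ`. A Dieudonné complete space is a
closed subspace of the product of its images in metrizable factors, so it remains to see that a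
metrizable space `N` whose cellularity is not Ulam-measurable is realcompact.

For a point `p` of the closure of `N` in `ℝ ^ C(N, ℝ)`, the level sets `{f = p f}` generate a
countably complete filter, which is prime on countable unions of closed sets. Applied to a
σ-discrete refinement (after Stone) of the cover by `r`-balls, primeness and the absence of
countably complete nonprincipal ultrafilters on the index set put one closed `r`-ball into the
filter, for every `r`. Hence the filter contains a single point `x`, and `p` is evaluation at `x`.
-/

open Cardinal Filter MeasureTheory Function

theorem CarriesUlamUltrafilter.of_injective {α β : Type u} {g : α → β}
    (hg : Injective g) (h : CarriesUlamUltrafilter α) : CarriesUlamUltrafilter β := by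
  obtain ⟨f, hf, _⟩ := h
  refine ⟨f.map g, fun b hb => ?_, inferInstanceAs (CountableInterFilter (Filter.map g f))⟩
  have hmem : g ⁻¹' {b} ∈ f := by
    change {b} ∈ f.map g
    rw [hb]
    exact Filter.singleton_mem_pure
  obtain ⟨a, -, rfl⟩ :=
    Ultrafilter.eq_pure_of_finite_mem ((subsingleton_singleton.preimage hg).finite) hmem
  exact hf a rfl

theorem CarriesUlamUltrafilter.isUlamMeasurable_of_mk_le {α : Type u} {τ : Cardinal.{u}}
    (h : CarriesUlamUltrafilter α) (hle : #α ≤ τ) : τ.IsUlamMeasurable := by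
  rw [← mk_out τ] at hle
  obtain ⟨g⟩ := hle
  exact ⟨τ.out, mk_out τ, h.of_injective g.injective⟩

def CellularityLE (X : Type u) [TopologicalSpace X] (κ : Cardinal.{u}) : Prop :=
  ∀ (J : Type u) (W : J → Set X), (∀ j, IsOpen (W j)) → (∀ j, (W j).Nonempty) →
    Pairwise (Disjoint on W) → #J ≤ κ

theorem CellularityLE.of_denseRange {X Y : Type u} [TopologicalSpace X] [TopologicalSpace Y]
    {κ : Cardinal.{u}} {f : X → Y} (hf : Continuous f) (hd : DenseRange f)
    (h : CellularityLE X κ) : CellularityLE Y κ := fun J W hW hne hdisj =>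
  h J (fun j => f ⁻¹' W j) (fun j => (hW j).preimage hf)
    (fun j => hd.exists_mem_open (hW j) (hne j)) fun _ _ hij => (hdisj hij).preimage f

theorem countable_setOf_inter_interior_nonempty {X ι : Type*} [TopologicalSpace X]
    [MeasurableSpace X] (μ : Measure X) [μ.IsOpenPosMeasure] [IsFiniteMeasureOnCompacts μ]
    [OpensMeasurableSpace X] {P : ι → Set X} (hP : ∀ i, IsOpen (P i))
    (hdisj : Pairwise (Disjoint on P)) {K : Set X} (hK : IsCompact K) :
    {i | (P i ∩ interior K).Nonempty}.Countable := by
  have hopen : ∀ i, IsOpen (P i ∩ interior K) := fun i => (hP i).inter isOpen_interior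
  refine (Measure.countable_meas_pos_of_disjoint_of_meas_iUnion_ne_top μ
    (fun i => (hopen i).measurableSet)
    (fun i j hij => (hdisj hij).mono inter_subset_left inter_subset_left) ?_).mono
    fun i hi => (hopen i).measure_pos μ hi
  refine (measure_mono (iUnion_subset fun i => ?_)).trans_lt hK.measure_lt_top |>.ne
  exact inter_subset_right.trans interior_subset

theorem mk_le_mk_mul_aleph0_of_pairwise_disjoint {L J : Type u} [Group L] [TopologicalSpace L]
    [IsTopologicalGroup L] [LocallyCompactSpace L] {P : J → Set L} (hP : ∀ j, IsOpen (P j))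
    (hdisj : Pairwise (Disjoint on P)) {S K : Set L} (hK : IsCompact K)
    (hPS : ∀ j, (P j ∩ (S * interior K)).Nonempty) : #J ≤ #S * ℵ₀ := by
  borelize L
  have hcover : (univ : Set J) ⊆ ⋃ s : S, {j | (P j ∩ interior ((s : L) • K)).Nonempty} := by
    intro j _
    obtain ⟨_, hx, s, hs, k, hk, rfl⟩ := hPS j
    exact mem_iUnion.2 ⟨⟨s, hs⟩, _, hx, by rw [interior_smul]; exact smul_mem_smul_set hk⟩
  calc #J = #(univ : Set J) := mk_univ.symm
    _ ≤ _ := mk_le_mk_of_subset hcover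
    _ ≤ #S * ⨆ s : S, #{j | (P j ∩ interior ((s : L) • K)).Nonempty} := mk_iUnion_le _
    _ ≤ #S * ℵ₀ := by
      gcongr
      exact ciSup_le' fun s =>
        (countable_setOf_inter_interior_nonempty Measure.haar hP hdisj (hK.smul _)).le_aleph0

theorem Topology.IsInducing.exists_pairwise_disjoint_isOpen_preimage_eq {X Y ι : Type*}
    [TopologicalSpace X] [TopologicalSpace Y] {f : X → Y} (hf : IsInducing f) {O : Set Y}
    (hO : IsOpen O) (hfO : range f ⊆ O) (hOf : O ⊆ closure (range f)) {W : ι → Set X}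
    (hW : ∀ i, IsOpen (W i)) (hdisj : Pairwise (Disjoint on W)) :
    ∃ P : ι → Set Y, (∀ i, IsOpen (P i)) ∧ Pairwise (Disjoint on P) ∧ ∀ i, f ⁻¹' P i = W i := by
  choose B hB hBW using fun i => hf.isOpen_iff.1 (hW i)
  refine ⟨fun i => B i ∩ O, fun i => (hB i).inter hO, fun i j hij => ?_, fun i => ?_⟩
  · rw [onFun, Set.disjoint_iff_inter_eq_empty, ← not_nonempty_iff_eq_empty]
    intro hne
    -- a nonempty open subset of `O` meets the range of `f`
    obtain ⟨_, ⟨⟨hi, -⟩, hj, -⟩, x, rfl⟩ :=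
      mem_closure_iff.1 (hOf hne.some_mem.1.2) _ (((hB i).inter hO).inter ((hB j).inter hO))
        hne.some_mem
    exact disjoint_left.1 (hdisj hij) (hBW i ▸ mem_preimage.2 hi) (hBW j ▸ mem_preimage.2 hj)
  · rw [preimage_inter, hBW i, preimage_eq_univ_iff.2 hfO, inter_univ]

theorem cellularityLE_of_isTauPrecompact {L : Type u} [Group L] [TopologicalSpace L]
    [IsTopologicalGroup L] [LocallyCompactSpace L] {G : Subgroup L} (hG : Dense (G : Set L))
    {U : Set G} (hU : IsOpen U) {τ : Cardinal.{u}} (hτ : ℵ₀ ≤ τ) (hpre : IsTauPrecompact τ U) :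
    CellularityLE U τ := by
  intro J W hW hne hdisj
  let ι : U → L := fun x => ((x : G) : L)
  obtain ⟨O, hO, hOU⟩ := isOpen_induced_iff.1 hU
  have hrange : range ι = O ∩ G := by
    ext x
    constructor
    · rintro ⟨⟨g, hg⟩, rfl⟩
      exact ⟨hOU ▸ hg, g.2⟩
    · rintro ⟨hxO, hxG⟩
      exact ⟨⟨⟨x, hxG⟩, hOU ▸ hxO⟩, rfl⟩
  obtain ⟨P, hP, hPdisj, hPW⟩ :=
    (IsInducing.subtypeVal.comp IsInducing.subtypeVal).exists_pairwise_disjoint_isOpen_preimage_eq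
      hO (hrange ▸ inter_subset_left) (hrange ▸ hG.open_subset_closure_inter hO) hW hdisj
  obtain ⟨K, hK, hK1⟩ := exists_compact_mem_nhds (1 : L)
  obtain ⟨S, -, hS, hUS⟩ := hpre _
    (continuous_subtype_val.continuousAt.preimage_mem_nhds (interior_mem_nhds.2 hK1))
  have hPS : ∀ j, (P j ∩ (((↑) '' S : Set L) * interior K)).Nonempty := by
    intro j
    obtain ⟨w, hw⟩ := hne j
    obtain ⟨s, hs, v, hv, hsv⟩ := (hUS w.2).1
    refine ⟨ι w, ?_, s, mem_image_of_mem _ hs, v, hv, ?_⟩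
    · rw [← hPW j] at hw
      exact hw
    · simp only [ι, ← hsv, Subgroup.coe_mul]
  calc #J ≤ #((↑) '' S : Set L) * ℵ₀ :=
        mk_le_mk_mul_aleph0_of_pairwise_disjoint hP hPdisj hK hPS
    _ ≤ τ * τ := mul_le_mul' (mk_image_le.trans hS) hτ
    _ = τ := mul_eq_self hτ

theorem Topology.IsClosedEmbedding.of_comp_injective {X Y Z : Type*} [TopologicalSpace X]
    [TopologicalSpace Y] [TopologicalSpace Z] {f : X → Y} {g : Y → Z} (hf : Continuous f)
    (hg : Continuous g) (hg' : Injective g) (hgf : IsClosedEmbedding (g ∘ f)) :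
    IsClosedEmbedding f :=
  ⟨.of_comp hf hg hgf.isEmbedding, by
    rw [← hg'.preimage_image (range f), ← range_comp]
    exact hgf.isClosed_range.preimage hg⟩

def Homeomorph.sigmaCurry {ι : Type*} (κ : ι → Type*) : ((Σ i, κ i) → ℝ) ≃ₜ ∀ i, κ i → ℝ where
  toEquiv := Equiv.piCurry fun _ _ => ℝ
  continuous_toFun :=
    continuous_pi fun i => continuous_pi fun j => continuous_apply (⟨i, j⟩ : Σ i, κ i)
  continuous_invFun := continuous_pi fun p => (continuous_apply p.2).comp (continuous_apply p.1)

theorem RealcompactSpace.of_isClosedEmbedding {X Y : Type u} [TopologicalSpace X]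
    [TopologicalSpace Y] {f : X → Y} (hf : IsClosedEmbedding f) (hY : RealcompactSpace Y) :
    RealcompactSpace X := by
  obtain ⟨ι, g, hg⟩ := hY
  exact ⟨ι, g ∘ f, hg.comp hf⟩

theorem RealcompactSpace.pi {ι : Type u} {X : ι → Type u} [∀ i, TopologicalSpace (X i)]
    (h : ∀ i, RealcompactSpace (X i)) : RealcompactSpace (∀ i, X i) := by
  choose κ f hf using h
  exact ⟨Σ i, κ i, _, (Homeomorph.sigmaCurry κ).symm.isClosedEmbedding.comp (.piMap hf)⟩

theorem isEmbedding_eval_continuousMap {X : Type*} [TopologicalSpace X]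
    [CompletelyRegularSpace X] [T0Space X] : IsEmbedding fun x (f : C(X, ℝ)) => f x := by
  refine IsInducing.isEmbedding (isInducing_iff_nhds.2 fun x => le_antisymm
    ((continuous_pi fun f => f.continuous).tendsto x).le_comap fun s hs => ?_)
  obtain ⟨g, hg, hgx, hg1⟩ := CompletelyRegularSpace.completely_regular_isOpen x (interior s)
    isOpen_interior (mem_interior_iff_mem_nhds.2 hs)
  let g' : C(X, ℝ) := ⟨fun y => g y, continuous_subtype_val.comp hg⟩
  refine mem_comap.2 ⟨{q | q g' < 1}, (isOpen_lt (continuous_apply g') continuous_const).mem_nhds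
    (by simp [g', hgx]), fun y hy => interior_subset (by_contra fun hys => ?_)⟩
  have hgy : g y = 1 := hg1 hys
  simp [g', hgy] at hy

theorem summable_half_pow_mul {a : ℕ → ℝ} (ha₀ : ∀ n, 0 ≤ a n) (ha₁ : ∀ n, a n ≤ 1) :
    Summable fun n => (1 / 2 : ℝ) ^ n * a n :=
  summable_geometric_two.of_nonneg_of_le (fun n => mul_nonneg (by positivity) (ha₀ n))
    fun n => mul_le_of_le_one_right (by positivity) (ha₁ n)

theorem tsum_half_pow_mul_le {a : ℕ → ℝ} (ha₀ : ∀ n, 0 ≤ a n) (ha₁ : ∀ n, a n ≤ 1) (K : ℕ) :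
    ∑' n, (1 / 2 : ℝ) ^ n * a n ≤
      ∑ n ∈ Finset.range K, (1 / 2 : ℝ) ^ n * a n + 2 * (1 / 2) ^ K := by
  rw [← (summable_half_pow_mul ha₀ ha₁).sum_add_tsum_nat_add K]
  gcongr
  calc ∑' n, (1 / 2 : ℝ) ^ (n + K) * a (n + K) ≤ ∑' n, (1 / 2 : ℝ) ^ (n + K) :=
        ((summable_half_pow_mul ha₀ ha₁).comp_injective (add_left_injective K)).tsum_le_tsum
          (fun n => mul_le_of_le_one_right (by positivity) (ha₁ _))
          (summable_geometric_two.comp_injective (add_left_injective K))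
    _ = 2 * (1 / 2) ^ K := by simp_rw [pow_add, tsum_mul_right, tsum_geometric_two]

/-- For Tychonoff `X` this is the Hewitt realcompactification `υX`. -/
def hewittExtension (X : Type*) [TopologicalSpace X] : Set (C(X, ℝ) → ℝ) :=
  closure (range fun x f => f x)

namespace hewittExtension

variable {X : Type*} [TopologicalSpace X] {p : C(X, ℝ) → ℝ}

theorem mem_of_isClosed (hp : p ∈ hewittExtension X) {s : Set (C(X, ℝ) → ℝ)} (hs : IsClosed s)
    (h : ∀ x : X, (fun f => f x) ∈ s) : p ∈ s :=
  closure_minimal (range_subset_iff.2 h) hs hp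

theorem exists_apply_eq (hp : p ∈ hewittExtension X) (f : C(X, ℝ)) : ∃ x, f x = p f := by
  by_contra! h
  -- `f - p f` is a unit of `C(X, ℝ)`, while `p` sends it to `0`
  obtain ⟨u, hu⟩ := (ContinuousMap.isUnit_iff_forall_ne_zero (f - .const X (p f))).2
    fun x => sub_ne_zero.2 (h x)
  have hp' : p ∈ {q | q ↑u⁻¹ * (q f - p f) = 1} := by
    refine mem_of_isClosed hp (isClosed_eq (by fun_prop) continuous_const) fun x => ?_
    have hx := DFunLike.congr_fun u.inv_mul x
    rw [hu] at hx
    simpa using hx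
  simp at hp'

theorem exists_forall_apply_eq_zero (hp : p ∈ hewittExtension X) {t : ℕ → C(X, ℝ)}
    (ht₀ : ∀ n x, 0 ≤ t n x) (ht₁ : ∀ n x, t n x ≤ 1) (hpt : ∀ n, p (t n) = 0) :
    ∃ x, ∀ n, t n x = 0 := by
  have hterm : ∀ n x, 0 ≤ (1 / 2 : ℝ) ^ n * t n x := fun n x => by have := ht₀ n x; positivity
  let g : C(X, ℝ) := ⟨fun x => ∑' n, (1 / 2 : ℝ) ^ n * t n x,
    continuous_tsum (fun n => by fun_prop) summable_geometric_two fun n x => by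
      rw [Real.norm_of_nonneg (hterm n x)]
      exact mul_le_of_le_one_right (by positivity) (ht₁ n x)⟩
  -- `p` kills every partial sum of `g`, so `p g` is bounded by the tails `2 * (1 / 2) ^ K`
  have hpg : p g ≤ 0 := by
    refine ge_of_tendsto ((tendsto_pow_atTop_nhds_zero_of_lt_one (by norm_num)
      (by norm_num : (1 / 2 : ℝ) < 1)).const_mul 2) (Eventually.of_forall fun K => ?_)
      |>.trans_eq (mul_zero _)
    have hpK : p ∈ {q | q g ≤ ∑ n ∈ Finset.range K, (1 / 2 : ℝ) ^ n * q (t n) + 2 * (1 / 2) ^ K} :=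
      mem_of_isClosed hp (isClosed_le (by fun_prop) (by fun_prop)) fun x =>
        tsum_half_pow_mul_le (ht₀ · x) (ht₁ · x) K
    simpa [hpt] using hpK
  obtain ⟨x, hx⟩ := exists_apply_eq hp g
  have hzero : HasSum (fun n => (1 / 2 : ℝ) ^ n * t n x) 0 := by
    have hgx : g x ≤ 0 := hx ▸ hpg
    convert (summable_half_pow_mul (ht₀ · x) (ht₁ · x)).hasSum
    exact (le_antisymm hgx (tsum_nonneg (hterm · x))).symm
  refine ⟨x, fun n => ?_⟩
  simpa using congr_fun ((hasSum_zero_iff_of_nonneg (hterm · x)).1 hzero) n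

theorem exists_forall_apply_eq (hp : p ∈ hewittExtension X) {ι : Type*} [Countable ι]
    (f : ι → C(X, ℝ)) : ∃ x, ∀ i, f i x = p (f i) := by
  cases isEmpty_or_nonempty ι with
  | inl _ => exact (exists_apply_eq hp 0).imp fun _ _ => isEmptyElim
  | inr _ =>
    obtain ⟨e, he⟩ := exists_surjective_nat ι
    -- `t n` vanishes exactly where `f (e n) = p (f (e n))`
    let t : ℕ → C(X, ℝ) := fun n =>
      (f (e n) - .const X (p (f (e n)))) * (f (e n) - .const X (p (f (e n)))) ⊓ 1
    have hpt : ∀ n, p (t n) = 0 := fun n => by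
      have h : p ∈ {q | 0 ≤ q (t n)} ∩ {q | q (t n) ≤ (q (f (e n)) - p (f (e n))) ^ 2} :=
        mem_of_isClosed hp ((isClosed_le (by fun_prop) (by fun_prop)).inter
          (isClosed_le (by fun_prop) (by fun_prop))) fun x =>
            ⟨show 0 ≤ t n x from le_inf (mul_self_nonneg _) zero_le_one,
              show t n x ≤ _ from inf_le_left.trans_eq (sq _).symm⟩
      have h₂ : p (t n) ≤ (p (f (e n)) - p (f (e n))) ^ 2 := h.2
      have h₁ : 0 ≤ p (t n) := h.1
      rw [sub_self, zero_pow two_ne_zero] at h₂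
      exact le_antisymm h₂ h₁
    obtain ⟨x, hx⟩ := exists_forall_apply_eq_zero hp
      (fun n x => le_inf (mul_self_nonneg _) zero_le_one) (fun n x => inf_le_right) hpt
    refine ⟨x, fun i => ?_⟩
    obtain ⟨n, rfl⟩ := he i
    have := hx n
    simp only [t, ContinuousMap.inf_apply, ContinuousMap.mul_apply, ContinuousMap.sub_apply,
      ContinuousMap.const_apply, ContinuousMap.one_apply] at this
    rcases min_choice ((f (e n) x - p (f (e n))) * (f (e n) x - p (f (e n)))) 1 with h | h
    · rw [h] at this; linarith [mul_self_eq_zero.1 this]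
    · rw [h] at this; exact absurd this one_ne_zero

def levelFilter (p : C(X, ℝ) → ℝ) : Filter X :=
  countableGenerate (range fun f => {x | f x = p f})

instance : CountableInterFilter (levelFilter p) := by
  unfold levelFilter; infer_instance

theorem setOf_apply_eq_mem_levelFilter (f : C(X, ℝ)) : {x | f x = p f} ∈ levelFilter p :=
  mem_countableGenerate_iff.2 ⟨{{x | f x = p f}}, by simp, countable_singleton _, by simp⟩

theorem levelFilter_neBot (hp : p ∈ hewittExtension X) : (levelFilter p).NeBot := by
  refine ⟨fun h => ?_⟩
  obtain ⟨S, hS, hSc, hSe⟩ := mem_countableGenerate_iff.1 (h ▸ mem_bot : ∅ ∈ levelFilter p)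
  choose f hf using hS
  have := hSc.to_subtype
  obtain ⟨x, hx⟩ := exists_forall_apply_eq hp fun s : S => f s.2
  refine hSe (mem_sInter.2 fun s hs => ?_ : x ∈ ⋂₀ S)
  rw [← hf hs]
  exact hx ⟨s, hs⟩

end hewittExtension

def UniformlySeparated {X ι : Type*} [PseudoMetricSpace X] (δ : ℝ) (V : ι → Set X) : Prop :=
  Pairwise fun i j => ∀ x ∈ V i, ∀ y ∈ V j, δ ≤ dist x y

namespace UniformlySeparated

variable {X ι : Type*} [PseudoMetricSpace X] {δ : ℝ} {V : ι → Set X}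

theorem closure (h : UniformlySeparated δ V) :
    UniformlySeparated δ fun i => closure (V i) := by
  intro i j hij x hx y hy
  have hxV : ∀ y ∈ V j, δ ≤ dist x y := fun y hy =>
    closure_minimal (fun x hx => h hij x hx y hy)
      (isClosed_le continuous_const (continuous_id.dist continuous_const)) hx
  exact closure_minimal hxV (isClosed_le continuous_const (continuous_const.dist continuous_id)) hy

theorem pairwise_disjoint (h : UniformlySeparated δ V) (hδ : 0 < δ) :
    Pairwise (Disjoint on V) := fun i j hij =>
  disjoint_left.2 fun x hi hj => (h hij x hi x hj).not_gt (by simpa using hδ)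

theorem locallyFinite (h : UniformlySeparated δ V) (hδ : 0 < δ) : LocallyFinite V := by
  intro x
  refine ⟨Metric.ball x (δ / 2), Metric.ball_mem_nhds x (half_pos hδ), Subsingleton.finite ?_⟩
  rintro i ⟨y, hyV, hyx⟩ j ⟨z, hzV, hzx⟩
  by_contra hij
  rw [Metric.mem_ball] at hyx hzx
  linarith [h hij y hyV z hzV, dist_triangle_right y z x]

end UniformlySeparated

theorem exists_uniformlySeparated_cover {N : Type*} [PseudoMetricSpace N] {r : ℝ} (hr : 0 < r) :
    ∃ V : ℕ → N → Set N, (∀ k x, IsOpen (V k x)) ∧ (∀ k x, V k x ⊆ Metric.ball x r) ∧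
      (∀ y, ∃ k x, y ∈ V k x) ∧ ∀ k, ∃ δ > 0, UniformlySeparated δ (V k) := by
  -- Stone's construction: well-order `N` and let `V k x` be the part of `ball x (r - 2 / (k + 1))`
  -- that lies farther than `r - 1 / (k + 1)` from every predecessor of `x`
  let R : N → N → Prop := WellOrderingRel
  have hwf : WellFounded R := IsWellFounded.wf
  let ε : ℕ → ℝ := fun k => 1 / (k + 1)
  have hε : ∀ k, 0 < ε k := fun k => Nat.one_div_pos_of_nat
  let V : ℕ → N → Set N := fun k x =>
    Metric.ball x (r - 2 * ε k) \ Metric.cthickening (r - ε k) {z | R z x}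
  refine ⟨V, fun k x => Metric.isOpen_ball.sdiff Metric.isClosed_cthickening,
    fun k x => sdiff_subset.trans (Metric.ball_subset_ball (by linarith [hε k])), fun y => ?_,
    fun k => ⟨ε k, hε k, ?_⟩⟩
  · let x₀ := hwf.min {x | dist y x < r} ⟨y, by simpa using hr⟩
    have hx₀ : dist y x₀ < r := hwf.min_mem {x | dist y x < r} _
    obtain ⟨k, hk⟩ := exists_nat_one_div_lt (by linarith : 0 < (r - dist y x₀) / 2)
    refine ⟨k, x₀, ?_, fun hy => ?_⟩
    · rw [Metric.mem_ball]
      linarith [show ε k = 1 / (k + 1) from rfl]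
    · obtain ⟨z, hz, hyz⟩ := Metric.mem_thickening_iff.1
        (Metric.cthickening_subset_thickening' hr (by linarith [hε k]) _ hy)
      exact hwf.not_lt_min _ hyz hz
  · -- if `a` precedes `b`, then `V k b` is far from `a` while `V k a` is close to it
    have key : ∀ a b, R a b → ∀ v ∈ V k b, ∀ w ∈ V k a, ε k ≤ dist v w := by
      intro a b hab v hv w hw
      have hva : r - ε k < dist v a := lt_of_not_ge fun h =>
        hv.2 (Metric.mem_cthickening_of_dist_le v a _ _ hab h)
      have hwa : dist w a < r - 2 * ε k := hw.1
      linarith [dist_triangle v w a]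
    intro a b hab v hv w hw
    rcases trichotomous_of R a b with h | h | h
    · rw [dist_comm]
      exact key a b h w hw v hv
    · exact absurd h hab
    · exact key b a h v hv w hw

namespace hewittExtension

variable {X : Type*} [PseudoMetricSpace X] {p : C(X, ℝ) → ℝ}

theorem exists_mem_levelFilter_of_iUnion_mem (hp : p ∈ hewittExtension X)
    {ι : Type*} [Countable ι] {A : ι → Set X} (hA : ∀ i, IsClosed (A i))
    (h : ⋃ i, A i ∈ levelFilter p) : ∃ i, A i ∈ levelFilter p := by
  let d : ι → C(X, ℝ) := fun i => ⟨(Metric.infDist · (A i)), Metric.continuous_infDist_pt _⟩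
  obtain ⟨x, hx, hxA⟩ := (levelFilter_neBot hp).nonempty_of_mem <|
    inter_mem ((countable_iInter_mem.2 fun i => setOf_apply_eq_mem_levelFilter (d i))) h
  obtain ⟨i, hi⟩ := mem_iUnion.1 hxA
  -- `p` vanishes at the distance function to `A i`, whose zero set is `A i`
  have hpd : p (d i) = 0 := (mem_iInter.1 hx i).symm.trans (Metric.infDist_zero_of_mem hi)
  have hlevel : {y | d i y = p (d i)} = A i := by
    ext y
    rw [mem_ofPred_eq, hpd, (hA i).mem_iff_infDist_zero ⟨x, hi⟩]
    rfl
  exact ⟨i, hlevel ▸ setOf_apply_eq_mem_levelFilter (d i)⟩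

theorem exists_mem_levelFilter_of_uniformlySeparated (hp : p ∈ hewittExtension X)
    {J : Type u} {C : J → Set X} (hC : ∀ j, IsClosed (C j)) {δ : ℝ} (hδ : 0 < δ)
    (hsep : UniformlySeparated δ C) (hmem : ⋃ j, C j ∈ levelFilter p)
    (hJ : ¬ CarriesUlamUltrafilter J) : ∃ j, C j ∈ levelFilter p := by
  classical
  have := levelFilter_neBot hp
  obtain ⟨j₀⟩ : Nonempty J := nonempty_of_nonempty_iUnion (nonempty_of_mem hmem)
  let ψ : X → J := fun x => if h : ∃ j, x ∈ C j then h.choose else j₀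
  have hψ : ∀ w : Set J, ⋃ j : w, C j ⊆ ψ ⁻¹' w := by
    intro w x hx
    obtain ⟨⟨j, hj⟩, hxj⟩ := mem_iUnion.1 hx
    have h : ∃ j, x ∈ C j := ⟨j, hxj⟩
    have hψx : ψ x = j := by
      simp only [ψ, dif_pos h]
      by_contra hne
      linarith [hsep hne x h.choose_spec x hxj, dist_self x]
    rwa [mem_preimage, hψx]
  -- unions of subfamilies of `C` are closed by local finiteness, and `levelFilter p` is prime
  -- on closed sets
  have hprime : ∀ w : Set J, w ∉ map ψ (levelFilter p) → wᶜ ∈ map ψ (levelFilter p) := by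
    intro w hw
    have hcover : ⋃ j, C j ⊆ ⋃ b : Bool, ⋃ j : ↥(cond b wᶜ w), C j := fun x hx => by
      obtain ⟨j, hj⟩ := mem_iUnion.1 hx
      by_cases hjw : j ∈ w
      · exact mem_iUnion.2 ⟨false, mem_iUnion.2 ⟨⟨j, hjw⟩, hj⟩⟩
      · exact mem_iUnion.2 ⟨true, mem_iUnion.2 ⟨⟨j, hjw⟩, hj⟩⟩
    obtain ⟨b, hb⟩ := exists_mem_levelFilter_of_iUnion_mem hp
      (fun b => ((hsep.locallyFinite hδ).comp_injective Subtype.val_injective).isClosed_iUnion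
        fun j => hC j.1)
      (mem_of_superset hmem hcover)
    cases b
    · exact absurd (mem_of_superset hb (hψ w)) hw
    · exact mem_map.2 (mem_of_superset hb (hψ wᶜ))
  let 𝒰 : Ultrafilter J := .ofComplNotMemIff (map ψ (levelFilter p)) fun w =>
    ⟨fun h => by simpa using hprime wᶜ h, compl_notMem⟩
  obtain ⟨j, hj⟩ : ∃ j, 𝒰 = pure j := by
    by_contra! h
    exact hJ ⟨𝒰, h, inferInstanceAs (CountableInterFilter (map ψ (levelFilter p)))⟩
  have hψj : ψ ⁻¹' {j} ∈ levelFilter p := by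
    change {j} ∈ 𝒰
    rw [hj]
    exact singleton_mem_pure
  refine ⟨j, mem_of_superset (inter_mem hψj hmem) fun x ⟨hxj, hx⟩ => ?_⟩
  obtain ⟨i, hi⟩ := mem_iUnion.1 hx
  have : ψ x = i := hψ {i} (mem_iUnion.2 ⟨⟨i, rfl⟩, hi⟩)
  rwa [show j = i from (mem_singleton_iff.1 hxj).symm.trans this]

theorem exists_closedBall_mem_levelFilter {N : Type u} [PseudoMetricSpace N]
    {p : C(N, ℝ) → ℝ} (hp : p ∈ hewittExtension N) {τ : Cardinal.{u}} (hc : CellularityLE N τ)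
    (hτ : ¬ τ.IsUlamMeasurable) {r : ℝ} (hr : 0 < r) :
    ∃ y, Metric.closedBall y r ∈ levelFilter p := by
  obtain ⟨V, hVo, hVr, hVcov, hVsep⟩ := exists_uniformlySeparated_cover (N := N) hr
  have hcov : ⋃ k, closure (⋃ x, V k x) = Set.univ := eq_univ_of_forall fun y =>
    let ⟨k, x, h⟩ := hVcov y
    mem_iUnion.2 ⟨k, subset_closure (mem_iUnion.2 ⟨x, h⟩)⟩
  obtain ⟨k, hk⟩ :=
    exists_mem_levelFilter_of_iUnion_mem hp (fun _ => isClosed_closure) (hcov ▸ univ_mem)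
  obtain ⟨δ, hδ, hsep⟩ := hVsep k
  -- discard the empty members, so that the cellularity bound applies
  let J := {x : N // (V k x).Nonempty}
  have hsepJ : UniformlySeparated δ fun x : J => V k x := fun a b hab =>
    hsep (Subtype.val_injective.ne hab)
  have hJ : ¬ CarriesUlamUltrafilter J := fun h => hτ <| h.isUlamMeasurable_of_mk_le <|
    hc J _ (fun x => hVo k x) (fun x => x.2) (hsepJ.pairwise_disjoint hδ)
  have hunion : closure (⋃ x, V k x) = ⋃ x : J, closure (V k x) := by
    rw [← (hsepJ.locallyFinite hδ).closure_iUnion]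
    congr 1
    exact Subset.antisymm (iUnion_subset fun x y hy => mem_iUnion.2 ⟨⟨x, y, hy⟩, hy⟩)
      (iUnion_subset fun x => subset_iUnion (V k) x.1)
  obtain ⟨x, hx⟩ := exists_mem_levelFilter_of_uniformlySeparated hp (fun _ => isClosed_closure)
    hδ hsepJ.closure (hunion ▸ hk) hJ
  exact ⟨x, mem_of_superset hx
    ((closure_mono (hVr k x)).trans Metric.closure_ball_subset_closedBall)⟩

end hewittExtension

theorem realcompactSpace_of_cellularityLE {N : Type u} [TopologicalSpace N]
    [TopologicalSpace.MetrizableSpace N] {τ : Cardinal.{u}} (hc : CellularityLE N τ)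
    (hτ : ¬ τ.IsUlamMeasurable) : RealcompactSpace N := by
  let := TopologicalSpace.metrizableSpaceMetric N
  refine ⟨C(N, ℝ), _, isEmbedding_eval_continuousMap, isClosed_of_closure_subset fun p hp => ?_⟩
  have := hewittExtension.levelFilter_neBot hp
  choose y hy using fun n : ℕ =>
    hewittExtension.exists_closedBall_mem_levelFilter hp hc hτ (Nat.one_div_pos_of_nat (n := n))
  have hZ := countable_iInter_mem.2 hy
  have hsub : (⋂ n : ℕ, Metric.closedBall (y n) (1 / (n + 1))).Subsingleton := by
    intro a ha b hb
    refine eq_of_forall_dist_le fun ε hε => ?_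
    obtain ⟨n, hn⟩ := exists_nat_one_div_lt (half_pos hε)
    have ha' := Metric.mem_closedBall.1 (mem_iInter.1 ha n)
    have hb' := Metric.mem_closedBall.1 (mem_iInter.1 hb n)
    linarith [dist_triangle_right a b (y n)]
  obtain ⟨x, hx⟩ := Filter.nonempty_of_mem hZ
  refine ⟨x, funext fun f => ?_⟩
  obtain ⟨z, hzf, hzZ⟩ :=
    Filter.nonempty_of_mem (inter_mem (hewittExtension.setOf_apply_eq_mem_levelFilter f) hZ)
  rw [hsub hx hzZ]
  exact hzf

theorem realcompactSpace_of_isClosedEmbedding_pi {X ι : Type u} [TopologicalSpace X]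
    {M : ι → Type u} [∀ i, TopologicalSpace (M i)] [∀ i, TopologicalSpace.MetrizableSpace (M i)]
    {f : X → ∀ i, M i} (hf : IsClosedEmbedding f) {τ : Cardinal.{u}} (hc : CellularityLE X τ)
    (hτ : ¬ τ.IsUlamMeasurable) : RealcompactSpace X := by
  -- pass to the coordinate images, which inherit the cellularity bound from `X`
  let f' : X → ∀ i, range fun x => f x i := fun x i => ⟨f x i, x, rfl⟩
  have hf'c : Continuous f' :=
    continuous_pi fun i => ((continuous_apply i).comp hf.continuous).subtype_mk _
  have hf' : IsClosedEmbedding f' := .of_comp_injective hf'c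
    (continuous_pi fun i => continuous_subtype_val.comp (continuous_apply i))
    (Injective.piMap fun _ => Subtype.val_injective) hf
  refine .of_isClosedEmbedding hf' (.pi fun i => realcompactSpace_of_cellularityLE ?_ hτ)
  exact hc.of_denseRange ((continuous_apply i).comp hf'c)
    (Surjective.denseRange (by rintro ⟨_, x, rfl⟩; exact ⟨x, rfl⟩))

theorem realcompact_closure_of_dieudonneComplete_general
    {L : Type u} [Group L] [TopologicalSpace L] [IsTopologicalGroup L]
    [LocallyCompactSpace L]
    (G : Subgroup L) (hdense : Dense (G : Set L))
    (U : Set ↥G) (hUopen : IsOpen U)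
    (hDC : DieudonneComplete ↥(closure U))
    (τ : Cardinal.{u}) (hτ : Cardinal.aleph0 ≤ τ) (hUlam : ¬ τ.IsUlamMeasurable)
    (hpre : IsTauPrecompact τ U) :
    RealcompactSpace ↥(closure U) := by
  obtain ⟨ι, M, tM, hM, f, hf⟩ := hDC
  have hcell : CellularityLE (closure U) τ :=
    (cellularityLE_of_isTauPrecompact hdense hUopen hτ hpre).of_denseRange
      (continuous_inclusion subset_closure) ((denseRange_inclusion_iff _).2 subset_rfl)
  exact realcompactSpace_of_isClosedEmbedding_pi hf hcell hUlam

/-- If `G` is a dense subgroup of a locally compact Hausdorff group `L`, `U` an open subset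
of `G` whose closure in `G` is Dieudonné complete, and `U` is `τ`-precompact for some infinite
non-Ulam-measurable cardinal `τ` (i.e. `ip(U) < 𝔪`), then the closure of `U` in `G` is
realcompact. -/
theorem realcompact_closure_of_dieudonneComplete
    {L : Type u} [Group L] [TopologicalSpace L] [IsTopologicalGroup L]
    [LocallyCompactSpace L] [T2Space L]
    (G : Subgroup L) (hdense : Dense (G : Set L))
    (U : Set ↥G) (hUopen : IsOpen U)
    (hDC : DieudonneComplete ↥(closure U))
    (τ : Cardinal.{u}) (hτ : Cardinal.aleph0 ≤ τ) (hUlam : ¬ τ.IsUlamMeasurable)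
    (hpre : IsTauPrecompact τ U) :
    RealcompactSpace ↥(closure U) :=
  realcompact_closure_of_dieudonneComplete_general G hdense U hUopen hDC τ hτ hUlam hpre
end

section
/- Let L be a locally compact Hausdorff topological group and G a dense subgroup of L that is locally pseudocompact. Then G is zero-dimensional if and only if L is zero-dimensional. -/
open Set Topology

universe u

/-- A space is pseudocompact if every continuous real-valued function on it is bounded. -/
def IsPseudocompact (X : Type u) [TopologicalSpace X] : Prop :=
  ∀ f : X → ℝ, Continuous f → ∃ M : ℝ, ∀ x, |f x| ≤ M

/-- A topological group is locally pseudocompact if some neighborhood of the identity has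
pseudocompact closure. -/
def LocallyPseudocompactGrp (G : Type u) [Group G] [TopologicalSpace G] : Prop :=
  ∃ U ∈ nhds (1 : G), IsPseudocompact ↥(closure U)

/-- A space is zero-dimensional if its clopen sets form a base for the topology. -/
def ZeroDimensional (X : Type u) [TopologicalSpace X] : Prop :=
  TopologicalSpace.IsTopologicalBasis {s : Set X | IsClopen s}

/-! Zero-dimensionality passes from `L` to its subspace `G`. Conversely, let `U` be a neighbourhood
of `1` in `G` with pseudocompact closure `S`. Since a pseudocompact space carries no infinite
locally finite family of nonempty open sets, `S` meets every countable intersection of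
neighbourhoods of a point of its closure in `L`. On the other hand, in a locally compact group a
Haar measure argument shows that each point of the closure of a relatively compact open set `O` has
a countable intersection of neighbourhoods inside `closure O`. If a relatively clopen piece `B` of
`S` had closure meeting that of `S \ B`, these two facts would produce a point of `S` lying in one
of two disjoint open sets and in the closure of the other. Hence `closure B` is clopen in `L`, and
such sets form a base at `1`. -/

open Pointwise MeasureTheory Filter
open scoped ENNReal

instance IsTopologicalGroup.completelyRegularSpace (G : Type*) [TopologicalSpace G] [Group G]
    [IsTopologicalGroup G] : CompletelyRegularSpace G :=
  letI := IsTopologicalGroup.rightUniformSpace G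
  inferInstance

theorem ZeroDimensional.of_isInducing {X Y : Type*} [TopologicalSpace X] [TopologicalSpace Y]
    {f : X → Y} (hf : IsInducing f) (hY : ZeroDimensional Y) : ZeroDimensional X := by
  refine (hY.isInducing hf).of_isOpen_of_subset (fun _ hs => hs.isOpen) ?_
  rintro _ ⟨s, hs, rfl⟩
  exact hs.preimage hf.continuous

theorem zeroDimensional_of_forall_nhds_one_exists_isClopen {G : Type*} [TopologicalSpace G]
    [Group G] [IsTopologicalGroup G] (h : ∀ O ∈ 𝓝 (1 : G), ∃ T, IsClopen T ∧ (1 : G) ∈ T ∧ T ⊆ O) :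
    ZeroDimensional G := by
  refine TopologicalSpace.isTopologicalBasis_of_isOpen_of_nhds (fun _ hT => hT.isOpen)
    fun x O hx hO => ?_
  obtain ⟨T, hT, h1T, hTO⟩ :=
    h (x⁻¹ • O) ((hO.smul x⁻¹).mem_nhds (by simpa using smul_mem_smul_set (a := x⁻¹) hx))
  refine ⟨x • T, ⟨hT.1.smul x, hT.2.smul x⟩, by simpa using smul_mem_smul_set (a := x) h1T, ?_⟩
  simpa [Set.smul_set_subset_iff_subset_inv_smul_set] using hTO

section Pseudocompact

variable {X : Type*} [TopologicalSpace X] [CompletelyRegularSpace X]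

theorem IsPseudocompact.not_locallyFinite (hX : IsPseudocompact X) {U : ℕ → Set X}
    (hU : ∀ n, IsOpen (U n)) (hne : ∀ n, (U n).Nonempty) : ¬ LocallyFinite U := by
  intro hfin
  choose x hx using hne
  have hbump : ∀ n, ∃ φ : X → ℝ, Continuous φ ∧ φ (x n) = 1 ∧ (∀ z, 0 ≤ φ z) ∧
      Function.support φ ⊆ U n := by
    intro n
    obtain ⟨f, hf, hfx, hf1⟩ := CompletelyRegularSpace.completely_regular (x n) (U n)ᶜ
      (hU n).isClosed_compl (by simpa using hx n)
    refine ⟨fun z => 1 - f z, continuous_const.sub (continuous_subtype_val.comp hf), by simp [hfx],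
      fun z => sub_nonneg.2 (f z).2.2, fun z hz => ?_⟩
    by_contra hzU
    exact hz (by simp [hf1 hzU])
  choose φ hφc hφx hφ0 hφU using hbump
  let f : X → ℝ := fun z => ∑ᶠ n : ℕ, (n : ℝ) * φ n z
  have hf : Continuous f := continuous_finsum (fun n => continuous_const.mul (hφc n))
    (hfin.subset fun n => (Function.support_mul_subset_right _ _).trans (hφU n))
  obtain ⟨M, hM⟩ := hX f hf
  obtain ⟨n, hn⟩ := exists_nat_gt M
  have hfx : (n : ℝ) ≤ f (x n) := by
    calc (n : ℝ) = n * φ n (x n) := by rw [hφx, mul_one]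
      _ ≤ f (x n) := single_le_finsum (f := fun k : ℕ => (k : ℝ) * φ k (x n)) n
          ((hfin.point_finite (x n)).subset fun k hk => hφU k (right_ne_zero_of_mul hk))
          fun k => mul_nonneg k.cast_nonneg (hφ0 k _)
  linarith [le_abs_self (f (x n)), hM (x n)]

theorem IsPseudocompact.exists_forall_mem_closure (hX : IsPseudocompact X) {W : ℕ → Set X}
    (hW : ∀ n, IsOpen (W n)) (hanti : Antitone W) (hne : ∀ n, (W n).Nonempty) :
    ∃ y, ∀ n, y ∈ closure (W n) := by
  by_contra! h
  refine hX.not_locallyFinite hW hne fun y => ?_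
  obtain ⟨n, hn⟩ := h y
  refine ⟨(closure (W n))ᶜ, isClosed_closure.isOpen_compl.mem_nhds hn,
    (Set.finite_lt_nat n).subset fun m ⟨z, hzW, hz⟩ =>
      lt_of_not_ge fun hnm => hz (subset_closure (hanti hnm hzW))⟩

theorem IsPseudocompact.exists_forall_mem_of_mem_closure_range {Y : Type*} [TopologicalSpace Y]
    [RegularSpace Y] (hX : IsPseudocompact X) {ι : X → Y} (hι : Continuous ι) {x : Y}
    (hx : x ∈ closure (range ι)) {N : ℕ → Set Y} (hN : ∀ n, N n ∈ 𝓝 x) :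
    ∃ y, ∀ n, ι y ∈ N n := by
  choose F hF hFc hFN using fun n => exists_mem_nhds_isClosed_subset (hN n)
  let P : ℕ → Set Y := fun n => ⋂ m ≤ n, F m
  have hP : ∀ n, P n ∈ 𝓝 x := fun n => (biInter_mem (Set.finite_le_nat n)).2 fun m _ => hF m
  have hPc : ∀ n, IsClosed (P n) := fun n => isClosed_biInter fun m _ => hFc m
  have hanti : Antitone fun n => ι ⁻¹' interior (P n) := fun m n hmn =>
    preimage_mono (interior_mono (biInter_mono (fun k hk => le_trans hk hmn) fun _ _ => le_rfl))
  obtain ⟨y, hy⟩ := hX.exists_forall_mem_closure (fun n => isOpen_interior.preimage hι) hanti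
    fun n => by
      obtain ⟨_, hy, y, rfl⟩ :=
        mem_closure_iff.1 hx _ isOpen_interior (mem_interior_iff_mem_nhds.2 (hP n))
      exact ⟨y, hy⟩
  refine ⟨y, fun n => hFN n ?_⟩
  have hyP : ι y ∈ P n :=
    closure_minimal (preimage_mono interior_subset) ((hPc n).preimage hι) (hy n)
  exact mem_iInter₂.1 hyP n le_rfl

end Pseudocompact

theorem IsOpen.subset_closure_of_measure_sdiff_eq_zero {X : Type*} [TopologicalSpace X]
    [MeasurableSpace X] {μ : Measure X} [μ.IsOpenPosMeasure] {U O : Set X} (hU : IsOpen U)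
    (h : μ (U \ O) = 0) : U ⊆ closure O :=
  Set.sdiff_eq_empty.1 <| (hU.sdiff isClosed_closure).eq_empty_of_measure_zero <|
    measure_mono_null (sdiff_subset_sdiff_right subset_closure) h

theorem measure_smul_sdiff_le {G : Type*} [Group G] [MeasurableSpace G] (μ : Measure G)
    [μ.IsMulLeftInvariant] {g : G} {K O : Set G} (hK : g • K ⊆ O) : μ (g • O \ O) ≤ μ (O \ K) :=
  calc μ (g • O \ O) ≤ μ (g • O \ g • K) := measure_mono (sdiff_subset_sdiff_right hK)
    _ = μ (O \ K) := by rw [← smul_set_sdiff, measure_smul]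

section LocallyCompactGroup

variable {L : Type*} [TopologicalSpace L] [Group L] [IsTopologicalGroup L] [LocallyCompactSpace L]
  [T2Space L]

/- If `g` moves each compact set of a sequence exhausting the Haar measure of `O` into `O`, then
`g • O` exceeds `O` by a null set only, hence `g • closure O ⊆ closure O`; the sets `N n` make
`s * x⁻¹` such a `g`. -/
theorem IsOpen.exists_seq_nhds_iInter_subset_closure {O : Set L} (hO : IsOpen O)
    (hOc : IsCompact (closure O)) {x : L} (hx : x ∈ closure O) :
    ∃ N : ℕ → Set L, (∀ n, N n ∈ 𝓝 x) ∧ ⋂ n, N n ⊆ closure O := by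
  borelize L
  let μ : Measure L := Measure.haar
  have hμO : μ O ≠ ∞ := ((measure_mono subset_closure).trans_lt hOc.measure_lt_top).ne
  choose K hKO hKc hKμ using fun n : ℕ => hO.measurableSet.exists_isCompact_sdiff_lt hμO
    (ENNReal.inv_ne_zero.2 (ENNReal.natCast_ne_top n))
  refine ⟨fun n => {s | (s * x⁻¹) • K n ⊆ O}, fun n => ?_, fun s hs => ?_⟩
  · obtain ⟨T, hT, hTK⟩ := compact_open_separated_mul_left (hKc n) hO (hKO n)
    have : Tendsto (fun s => s * x⁻¹) (𝓝 x) (𝓝 1) := by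
      simpa using (continuous_mul_const x⁻¹).tendsto x
    exact mem_of_superset (this hT) fun s (hs : s * x⁻¹ ∈ T) =>
      show (s * x⁻¹) • K n ⊆ O from (smul_set_subset_mul hs).trans hTK
  · set g := s * x⁻¹
    have hnull : μ (g • O \ O) = 0 := by
      by_contra h
      obtain ⟨n, hn⟩ := ENNReal.exists_inv_nat_lt h
      exact lt_irrefl _
        (((measure_smul_sdiff_le μ (mem_iInter.1 hs n)).trans_lt (hKμ n)).trans hn)
    have hg : g • closure O ⊆ closure O := by
      rw [← closure_smul]
      exact closure_minimal ((hO.smul g).subset_closure_of_measure_sdiff_eq_zero hnull)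
        isClosed_closure
    simpa [g] using hg (smul_mem_smul_set hx)

theorem IsPseudocompact.exists_mem_closure_inter_closure {X : Type*} [TopologicalSpace X]
    [CompletelyRegularSpace X] (hX : IsPseudocompact X) {ι : X → L} (hι : Continuous ι) {x : L}
    (hx : x ∈ closure (range ι)) {N : Set L} (hN : N ∈ 𝓝 x) {O₁ O₂ : Set L} (hO₁ : IsOpen O₁)
    (hO₂ : IsOpen O₂) (hO₁c : IsCompact (closure O₁)) (hO₂c : IsCompact (closure O₂))
    (hx₁ : x ∈ closure O₁) (hx₂ : x ∈ closure O₂) :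
    ∃ y, ι y ∈ N ∧ ι y ∈ closure O₁ ∧ ι y ∈ closure O₂ := by
  obtain ⟨N₁, hN₁, hN₁O⟩ := hO₁.exists_seq_nhds_iInter_subset_closure hO₁c hx₁
  obtain ⟨N₂, hN₂, hN₂O⟩ := hO₂.exists_seq_nhds_iInter_subset_closure hO₂c hx₂
  obtain ⟨y, hy⟩ := hX.exists_forall_mem_of_mem_closure_range hι hx
    (N := fun n => N ∩ N₁ n ∩ N₂ n) fun n => inter_mem (inter_mem hN (hN₁ n)) (hN₂ n)
  exact ⟨y, (hy 0).1.1, hN₁O (mem_iInter.2 fun n => (hy n).1.2),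
    hN₂O (mem_iInter.2 fun n => (hy n).2)⟩

theorem isOpen_closure_image_of_isClopen {D : Set L} (hD : Dense D)
    {X : Type*} [TopologicalSpace X] [CompletelyRegularSpace X] (hX : IsPseudocompact X)
    {ι : X → L} (hι : IsInducing ι) {E : Set L} (hE : IsOpen E) (hEc : IsCompact (closure E))
    (hED : E ∩ D ⊆ range ι) {C : Set X} (hC : IsClopen C) (hCE : closure (ι '' C) ⊆ E) :
    IsOpen (closure (ι '' C)) := by
  set O₁ := E \ closure (ι '' Cᶜ)
  set O₂ := E \ closure (ι '' C)
  have hO₁ : IsOpen O₁ := hE.sdiff isClosed_closure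
  have hO₂ : IsOpen O₂ := hE.sdiff isClosed_closure
  have hcl : ∀ {A : Set X}, IsClosed A → ∀ y ∉ A, ι y ∉ closure (ι '' A) := fun hA y hy h =>
    hy (by rwa [← hA.closure_eq, hι.closure_eq_preimage_closure_image])
  have hO₁D : O₁ ∩ D ⊆ ι '' C := by
    rintro _ ⟨⟨hzE, hz⟩, hzD⟩
    obtain ⟨y, rfl⟩ := hED ⟨hzE, hzD⟩
    exact mem_image_of_mem ι (by_contra fun hy => hz (subset_closure (mem_image_of_mem ι hy)))
  have hO₁cl : O₁ ⊆ closure (ι '' C) :=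
    (hD.open_subset_closure_inter hO₁).trans (closure_mono hO₁D)
  have hdisj : Disjoint O₁ O₂ := disjoint_left.2 fun z h₁ h₂ => h₂.2 (hO₁cl h₁)
  have hsep : Disjoint (closure (ι '' C)) (closure (ι '' Cᶜ)) := by
    refine disjoint_left.2 fun x hxC hxC' => ?_
    have hxE : x ∈ E := hCE hxC
    have hx₁ : x ∈ closure O₁ := by
      refine closure_mono (image_subset_iff.2 fun y hy => ?_) hxC
      exact ⟨hCE (subset_closure (mem_image_of_mem ι hy)), hcl hC.isOpen.isClosed_compl y (· hy)⟩
    have hx₂ : x ∈ closure O₂ := by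
      refine closure_mono ?_ (hE.inter_closure ⟨hxE, hxC'⟩)
      rintro _ ⟨hzE, y, hy, rfl⟩
      exact ⟨hzE, hcl hC.isClosed y hy⟩
    have hEc' : ∀ {O}, O ⊆ E → IsCompact (closure O) := fun hOE =>
      hEc.of_isClosed_subset isClosed_closure (closure_mono hOE)
    obtain ⟨y, hyE, hy₁, hy₂⟩ := hX.exists_mem_closure_inter_closure hι.continuous
      (closure_mono (image_subset_range ι C) hxC) (hE.mem_nhds hxE) hO₁ hO₂
      (hEc' sdiff_subset) (hEc' sdiff_subset) hx₁ hx₂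
    by_cases hyC : y ∈ C
    · exact disjoint_left.1 (hdisj.closure_right hO₁)
        ⟨hyE, hcl hC.isOpen.isClosed_compl y (· hyC)⟩ hy₂
    · exact disjoint_left.1 (hdisj.symm.closure_right hO₂) ⟨hyE, hcl hC.isClosed y hyC⟩ hy₁
  have hclO₁ : closure (ι '' C) = O₁ :=
    subset_antisymm (fun z hz => ⟨hCE hz, disjoint_left.1 hsep hz⟩) hO₁cl
  rw [hclO₁]
  exact hO₁

theorem Dense.exists_isClopen_mem_subset_of_isPseudocompact_closure {D : Set L} (hD : Dense D)
    (hDz : ZeroDimensional D) {a : D} {U : Set D} (hU : U ∈ 𝓝 a)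
    (hUpc : IsPseudocompact (closure U)) {O : Set L} (hO : O ∈ 𝓝 (a : L)) :
    ∃ T, IsClopen T ∧ (a : L) ∈ T ∧ T ⊆ O := by
  obtain ⟨t, ht, htU⟩ := (mem_nhds_induced Subtype.val a U).1 hU
  obtain ⟨E, hE, haE, hEO, hEc⟩ := exists_open_between_and_isCompact_closure isCompact_singleton
    isOpen_interior (singleton_subset_iff.2 (mem_interior_iff_mem_nhds.2 (inter_mem hO ht)))
  obtain ⟨E', hE', haE', hE'E, -⟩ :=
    exists_open_between_and_isCompact_closure isCompact_singleton hE haE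
  obtain ⟨B, hB, haB, hBE'⟩ := hDz.exists_subset_of_mem_open
    (show a ∈ Subtype.val ⁻¹' E' from haE' rfl)
    (hE'.preimage continuous_subtype_val)
  have hEsub : E ⊆ O ∩ t := subset_closure.trans (hEO.trans interior_subset)
  let ι : closure U → L := fun y => y.1
  have hι : IsInducing ι := IsInducing.subtypeVal.comp IsInducing.subtypeVal
  have hED : E ∩ D ⊆ range ι := fun z ⟨hzE, hzD⟩ =>
    ⟨⟨⟨z, hzD⟩, subset_closure (htU (hEsub hzE).2)⟩, rfl⟩
  set C : Set (closure U) := Subtype.val ⁻¹' B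
  have hCE : closure (ι '' C) ⊆ E :=
    (closure_mono (s := ι '' C) (image_subset_iff.2 fun _ hy => hBE' hy)).trans hE'E
  refine ⟨closure (ι '' C), ⟨isClosed_closure, isOpen_closure_image_of_isClopen hD hUpc hι hE hEc
    hED (hB.preimage continuous_subtype_val) hCE⟩,
    subset_closure ⟨⟨a, subset_closure (mem_of_mem_nhds hU)⟩, haB, rfl⟩,
    hCE.trans fun z hz => (hEsub hz).1⟩

end LocallyCompactGroup

/-- A locally pseudocompact group `G`, dense in its locally compact Hausdorff completion `L`,
is zero-dimensional iff `L` is zero-dimensional. -/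
theorem zeroDimensional_iff_completion_zeroDimensional
    {L : Type u} [Group L] [TopologicalSpace L] [IsTopologicalGroup L]
    [LocallyCompactSpace L] [T2Space L]
    (G : Subgroup L) (hdense : Dense (G : Set L))
    (hlp : LocallyPseudocompactGrp ↥G) :
    ZeroDimensional ↥G ↔ ZeroDimensional L := by
  refine ⟨fun hG => zeroDimensional_of_forall_nhds_one_exists_isClopen fun O hO => ?_,
    fun hL => hL.of_isInducing IsInducing.subtypeVal⟩
  obtain ⟨U, hU, hUpc⟩ := hlp
  exact hdense.exists_isClopen_mem_subset_of_isPseudocompact_closure hG hU hUpc hO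
end

section
/- Let G be a topological group and D a dense subgroup of G. If D (with the subspace topology) is locally connected, then G is locally connected. -/
open Set Topology

universe u

/- Since `D` is dense, the closure in `G` of a neighbourhood `K` of `1` in `D` is a neighbourhood
of `1`, and it is connected when `K` is. Regularity of `G` lets us choose `K` so that this closure
stays inside a prescribed neighbourhood of `1`; translations then carry the connected
neighbourhood base from `1` to every point of `G`. -/

theorem Dense.closure_image_val_mem_nhds {X : Type*} [TopologicalSpace X] {D : Set X}
    (hD : Dense D) {x : D} {K : Set D} (hK : K ∈ 𝓝 x) :
    closure (Subtype.val '' K) ∈ 𝓝 (x : X) := by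
  obtain ⟨u, hu, huK⟩ := mem_nhds_subtype D x K |>.mp hK
  obtain ⟨t, htu, hto, hxt⟩ := mem_nhds_iff.mp hu
  have htD : t ∩ D ⊆ Subtype.val '' K := fun y ⟨hyt, hyD⟩ => ⟨⟨y, hyD⟩, huK (htu hyt), rfl⟩
  exact Filter.mem_of_superset (hto.mem_nhds hxt)
    ((hD.open_subset_closure_inter hto).trans (closure_mono htD))

theorem Dense.exists_isPreconnected_mem_nhds_subset {X : Type*} [TopologicalSpace X]
    [RegularSpace X] {D : Set X} [LocallyConnectedSpace D] (hD : Dense D) {x : X} (hx : x ∈ D)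
    {U : Set X} (hU : U ∈ 𝓝 x) : ∃ V ∈ 𝓝 x, IsPreconnected V ∧ V ⊆ U := by
  obtain ⟨W, hW, hWc, hWU⟩ := exists_mem_nhds_isClosed_subset hU
  have hWD : Subtype.val ⁻¹' W ∈ 𝓝 (⟨x, hx⟩ : D) :=
    continuous_subtype_val.continuousAt.preimage_mem_nhds hW
  obtain ⟨K, hK, hKc, hKW⟩ := locallyConnectedSpace_iff_connected_subsets.mp ‹_› _ _ hWD
  exact ⟨closure (Subtype.val '' K), hD.closure_image_val_mem_nhds hK,
    (hKc.image _ continuous_subtype_val.continuousOn).closure,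
    (closure_minimal (image_subset_iff.mpr hKW) hWc).trans hWU⟩

@[to_additive]
theorem IsTopologicalGroup.locallyConnectedSpace_of_nhds_one {G : Type*} [Group G]
    [TopologicalSpace G] [IsTopologicalGroup G]
    (h : ∀ U ∈ 𝓝 (1 : G), ∃ V ∈ 𝓝 (1 : G), IsPreconnected V ∧ V ⊆ U) :
    LocallyConnectedSpace G := by
  refine locallyConnectedSpace_iff_connected_subsets.mpr fun x U hU => ?_
  rw [← map_mul_left_nhds_one x] at hU ⊢
  obtain ⟨V, hV, hVc, hVU⟩ := h _ hU
  exact ⟨(x * ·) '' V, Filter.image_mem_map hV, hVc.image _ (continuous_const_mul x).continuousOn,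
    image_subset_iff.mpr hVU⟩

theorem locallyConnected_of_dense_subgroup_general
    {G : Type u} [Group G] [TopologicalSpace G] [IsTopologicalGroup G]
    (D : Subgroup G) (hdense : Dense (D : Set G))
    (hlc : LocallyConnectedSpace ↥D) :
    LocallyConnectedSpace G :=
  IsTopologicalGroup.locallyConnectedSpace_of_nhds_one fun _ =>
    hdense.exists_isPreconnected_mem_nhds_subset D.one_mem

/-- If `D` is a dense subgroup of a topological group `G` and `D` (with the subspace topology)
is locally connected, then `G` is locally connected. -/
theorem locallyConnected_of_dense_subgroup
    {G : Type u} [Group G] [TopologicalSpace G] [IsTopologicalGroup G] [T2Space G]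
    (D : Subgroup G) (hdense : Dense (D : Set G))
    (hlc : LocallyConnectedSpace ↥D) :
    LocallyConnectedSpace G :=
  locallyConnected_of_dense_subgroup_general D hdense hlc
end

section
/- Let L be a locally compact Hausdorff topological group and G a dense subgroup of L (so G is a locally precompact group). Then G is precompactly generated (algebraically generated by a precompact subset of G) if and only if L is compactly generated (algebraically generated by a compact subset of L). -/
open Set Topology Pointwise

universe u

/-- A subset `X` of a topological group `G` is precompact if for every neighborhood `U` of
the identity there is a finite `S ⊆ X` with `X ⊆ (S*U) ∩ (U*S)`. -/
def IsPrecompactSet {G : Type u} [Group G] [TopologicalSpace G] (X : Set G) : Prop :=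
  ∀ U ∈ nhds (1 : G), ∃ S : Set G, S.Finite ∧ S ⊆ X ∧ X ⊆ (S * U) ∩ (U * S)

/-- A topological group is precompactly generated if it is algebraically generated by a
precompact subset. -/
def PrecompactlyGenerated (G : Type u) [Group G] [TopologicalSpace G] : Prop :=
  ∃ X : Set G, IsPrecompactSet X ∧ Subgroup.closure X = ⊤

/-!
A precompact set has compact closure in `L`, so a precompact generating set of `G`, together with
a compact identity neighbourhood, generates an open, hence closed, subgroup of `L` containing the
dense subgroup `G`: all of `L`. Conversely, if `Q` is a compact symmetric identity neighbourhood
generating `L`, then `G ∩ Q³` is precompact and generates `G`: by density, every `pq` with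
`p, q ∈ Q` is `g v⁻¹` with `g ∈ G ∩ Q³`, `v ∈ Q`, so `L = ⟨G ∩ Q³⟩ Q`, and an element of `G`
written as `h p` in this decomposition has `p ∈ G ∩ Q`.
-/

section TopologicalGroup

variable {G : Type u} [Group G] [TopologicalSpace G] [IsTopologicalGroup G]

theorem IsCompact.isPrecompactSet_of_subset {X C : Set G} (hC : IsCompact C) (hXC : X ⊆ C) :
    IsPrecompactSet X := by
  intro U hU
  obtain ⟨V, hV, hVU⟩ := exists_nhds_split_inv hU
  -- Two points of `P y` differ by an element of `U` on either side.
  set P : G → Set G := fun y => {x | x⁻¹ * y ∈ V ∧ x * y⁻¹ ∈ V}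
  have hP : ∀ y ∈ C, P y ∈ 𝓝 y := fun y _ =>
    Filter.inter_mem
      (((continuous_inv.mul continuous_const).tendsto' y 1 (inv_mul_cancel y)) hV)
      (((continuous_id.mul continuous_const).tendsto' y 1 (mul_inv_cancel y)) hV)
  obtain ⟨t, -, hCt⟩ := hC.elim_nhds_subcover P hP
  choose! f hf using fun y (hy : (X ∩ P y).Nonempty) => hy
  refine ⟨f '' {y ∈ (t : Set G) | (X ∩ P y).Nonempty},
    ((t.finite_toSet.subset (sep_subset _ _)).image f), ?_, fun x hx => ?_⟩
  · rintro _ ⟨y, hy, rfl⟩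
    exact (hf y hy.2).1
  obtain ⟨y, hy, hxy⟩ := mem_iUnion₂.1 (hCt (hXC hx))
  have hne : (X ∩ P y).Nonempty := ⟨x, hx, hxy⟩
  have hsy := (hf y hne).2
  have hs : f y ∈ f '' {y ∈ (t : Set G) | (X ∩ P y).Nonempty} := mem_image_of_mem f ⟨hy, hne⟩
  refine ⟨⟨f y, hs, (f y)⁻¹ * x, ?_, mul_inv_cancel_left _ _⟩,
    ⟨x * (f y)⁻¹, ?_, f y, hs, inv_mul_cancel_right _ _⟩⟩
  · simpa [div_eq_mul_inv, mul_assoc] using hVU _ hsy.1 _ hxy.1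
  · simpa [div_eq_mul_inv, mul_assoc] using hVU _ hxy.2 _ hsy.2

theorem IsPrecompactSet.isCompact_closure [LocallyCompactSpace G] {X : Set G}
    (hX : IsPrecompactSet X) : IsCompact (closure X) := by
  obtain ⟨V, hVc, hV⟩ := exists_compact_mem_nhds (1 : G)
  obtain ⟨S, hS, -, hXS⟩ := hX V hV
  exact (hS.isCompact.mul hVc).closure_of_subset fun x hx => (hXS hx).1

theorem Subgroup.eq_top_of_mem_nhds_of_dense_le {H K : Subgroup G} (hH : (H : Set G) ∈ 𝓝 1)
    (hK : Dense (K : Set G)) (hKH : K ≤ H) : H = ⊤ := by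
  have hclosed := H.isClosed_of_isOpen (H.isOpen_of_mem_nhds hH)
  rw [← Subgroup.coe_eq_univ, ← hclosed.closure_eq, (hK.mono hKH).closure_eq]

end TopologicalGroup

namespace Subgroup

variable {L : Type u} [Group L] {G : Subgroup L}

theorem closure_eq_top_iff_le_closure_image {X : Set G} :
    closure X = ⊤ ↔ G ≤ closure ((↑) '' X : Set L) := by
  rw [← top_le_iff, ← map_subtype_le_map_subtype, ← MonoidHom.range_eq_map, range_subtype,
    MonoidHom.map_closure, coe_subtype]

theorem preimage_coe_image_mul_subset (A : Set G) (B : Set L) :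
    ((↑) : G → L) ⁻¹' ((↑) '' A * B) ⊆ A * (↑) ⁻¹' B := by
  rintro x ⟨_, ⟨a, ha, rfl⟩, b, hb, hab⟩
  have hbG : b ∈ G := by simpa [← hab] using mul_mem (inv_mem a.2) x.2
  exact ⟨a, ha, ⟨b, hbG⟩, hb, Subtype.ext hab⟩

theorem preimage_coe_mul_image_subset (A : Set G) (B : Set L) :
    ((↑) : G → L) ⁻¹' (B * (↑) '' A) ⊆ (↑) ⁻¹' B * A := by
  rintro x ⟨b, hb, _, ⟨a, ha, rfl⟩, hba⟩
  have hbG : b ∈ G := by simpa [← hba] using mul_mem x.2 (inv_mem a.2)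
  exact ⟨⟨b, hbG⟩, hb, a, ha, Subtype.ext hba⟩

variable [TopologicalSpace L]

theorem isPrecompactSet_image_coe_iff {X : Set G} :
    IsPrecompactSet ((↑) '' X : Set L) ↔ IsPrecompactSet X := by
  constructor
  · intro hX U hU
    rw [nhds_subtype, Filter.mem_comap] at hU
    obtain ⟨U', hU', hU'U⟩ := hU
    obtain ⟨S, hS, hSX, hXS⟩ := hX U' (by simpa using hU')
    have hS_eq : (↑) '' ((↑) ⁻¹' S : Set G) = S :=
      image_preimage_eq_of_subset (hSX.trans (image_subset_range _ _))
    refine ⟨(↑) ⁻¹' S, hS.preimage Subtype.val_injective.injOn, ?_, fun x hx => ?_⟩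
    · intro x hx
      obtain ⟨y, hy, hyx⟩ := hSX hx
      exact Subtype.val_injective hyx ▸ hy
    obtain ⟨hxSU, hxUS⟩ := hXS (mem_image_of_mem _ hx)
    rw [← hS_eq] at hxSU hxUS
    exact ⟨mul_subset_mul_left hU'U (preimage_coe_image_mul_subset _ _ hxSU),
      mul_subset_mul_right hU'U (preimage_coe_mul_image_subset _ _ hxUS)⟩
  · intro hX U hU
    have hU' : ((↑) ⁻¹' U : Set G) ∈ 𝓝 1 :=
      continuous_subtype_val.continuousAt.preimage_mem_nhds (by simpa using hU)
    obtain ⟨S, hS, hSX, hXS⟩ := hX _ hU'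
    refine ⟨(↑) '' S, hS.image _, image_mono hSX, ?_⟩
    rintro _ ⟨x, hx, rfl⟩
    obtain ⟨⟨s, hs, u, hu, rfl⟩, ⟨v, hv, t, ht, hvt⟩⟩ := hXS hx
    exact ⟨⟨s, mem_image_of_mem _ hs, u, hu, rfl⟩,
      ⟨v, hv, t, mem_image_of_mem _ ht, congrArg Subtype.val hvt⟩⟩

end Subgroup

theorem Dense.le_closure_inter_mul_mul {L : Type u} [Group L] [TopologicalSpace L]
    [IsTopologicalGroup L] {G : Subgroup L} (hG : Dense (G : Set L)) {Q : Set L}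
    (hQ : Q ∈ 𝓝 1) (hQinv : Q⁻¹ = Q) (hQgen : Subgroup.closure Q = ⊤) :
    G ≤ Subgroup.closure ((G : Set L) ∩ (Q * Q * Q)) := by
  set H := Subgroup.closure ((G : Set L) ∩ (Q * Q * Q))
  have inv_mem_Q : ∀ q ∈ Q, q⁻¹ ∈ Q := fun q hq => hQinv ▸ inv_mem_inv.2 hq
  -- `H * Q` is stable under right multiplication by `Q`: approximate `p * q` by `g ∈ G`.
  have mul_mem_HQ : ∀ x ∈ (H : Set L) * Q, ∀ q ∈ Q, x * q ∈ (H : Set L) * Q := by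
    rintro _ ⟨h, hh, p, hp, rfl⟩ q hq
    obtain ⟨g, hgG, v, hv, rfl⟩ := hG.exists_mem_open (isOpen_interior.smul (p * q))
      ⟨p * q, 1, mem_interior_iff_mem_nhds.2 hQ, mul_one _⟩
    have hg : (p * q) • v ∈ H :=
      Subgroup.subset_closure ⟨hgG, mul_mem_mul (mul_mem_mul hp hq) (interior_subset hv)⟩
    refine ⟨h * ((p * q) • v), mul_mem hh hg, v⁻¹, inv_mem_Q v (interior_subset hv), ?_⟩
    rw [smul_eq_mul]
    group
  have mem_HQ : ∀ x : L, x ∈ (H : Set L) * Q := by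
    intro x
    induction (hQgen ▸ Subgroup.mem_top x : x ∈ Subgroup.closure Q)
      using Subgroup.closure_induction_right with
    | one => exact ⟨1, one_mem H, 1, mem_of_mem_nhds hQ, one_mul 1⟩
    | mul_right x _ q hq ih => exact mul_mem_HQ x ih q hq
    | mul_inv_cancel x _ q hq ih => exact mul_mem_HQ x ih q⁻¹ (inv_mem_Q q hq)
  intro g hg
  obtain ⟨h, hh, p, hp, rfl⟩ := mem_HQ g
  have hpG : p ∈ G := by
    simpa using mul_mem (inv_mem ((Subgroup.closure_le G).2 inter_subset_left hh)) hg
  have h1 : (1 : L) ∈ Q := mem_of_mem_nhds hQ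
  have hpH : p ∈ H :=
    Subgroup.subset_closure ⟨hpG, by simpa using mul_mem_mul (mul_mem_mul hp h1) h1⟩
  exact mul_mem hh hpH

theorem precompactlyGenerated_iff_completion_compactlyGenerated_general
    {L : Type u} [Group L] [TopologicalSpace L] [IsTopologicalGroup L]
    [LocallyCompactSpace L]
    (G : Subgroup L) (hdense : Dense (G : Set L)) :
    PrecompactlyGenerated ↥G ↔ ∃ K : Set L, IsCompact K ∧ Subgroup.closure K = ⊤ := by
  constructor
  · rintro ⟨X, hX, hXgen⟩
    obtain ⟨V, hVc, hV⟩ := exists_compact_mem_nhds (1 : L)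
    refine ⟨closure (((↑) : G → L) '' X) ∪ V,
      (Subgroup.isPrecompactSet_image_coe_iff.2 hX).isCompact_closure.union hVc, ?_⟩
    refine Subgroup.eq_top_of_mem_nhds_of_dense_le
      (Filter.mem_of_superset hV (subset_union_right.trans Subgroup.subset_closure)) hdense ?_
    exact (Subgroup.closure_eq_top_iff_le_closure_image.1 hXgen).trans
      (Subgroup.closure_mono (subset_closure.trans subset_union_left))
  · rintro ⟨K, hKc, hKgen⟩
    obtain ⟨C, hCc, hC⟩ := exists_compact_mem_nhds (1 : L)
    set Q := (K ∪ C) ∪ (K ∪ C)⁻¹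
    have hQc : IsCompact Q := (hKc.union hCc).union (hKc.union hCc).inv
    have hQ : Q ∈ 𝓝 1 := Filter.mem_of_superset hC (subset_union_right.trans subset_union_left)
    have hQinv : Q⁻¹ = Q := by rw [union_inv, inv_inv, union_comm]
    have hQgen : Subgroup.closure Q = ⊤ :=
      top_unique (hKgen ▸ Subgroup.closure_mono (subset_union_left.trans subset_union_left))
    refine ⟨(↑) ⁻¹' (Q * Q * Q), Subgroup.isPrecompactSet_image_coe_iff.1
      (((hQc.mul hQc).mul hQc).isPrecompactSet_of_subset (image_preimage_subset _ _)), ?_⟩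
    rw [Subgroup.closure_eq_top_iff_le_closure_image, image_preimage_eq_inter_range,
      Subtype.range_coe, inter_comm]
    exact hdense.le_closure_inter_mul_mul hQ hQinv hQgen

/-- A locally precompact group `G`, dense in its locally compact Hausdorff completion `L`,
is precompactly generated iff `L` is compactly generated (algebraically generated by a
compact subset). -/
theorem precompactlyGenerated_iff_completion_compactlyGenerated
    {L : Type u} [Group L] [TopologicalSpace L] [IsTopologicalGroup L]
    [LocallyCompactSpace L] [T2Space L]
    (G : Subgroup L) (hdense : Dense (G : Set L)) :
    PrecompactlyGenerated ↥G ↔ ∃ K : Set L, IsCompact K ∧ Subgroup.closure K = ⊤ :=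
  precompactlyGenerated_iff_completion_compactlyGenerated_general G hdense
end

section
/- Let E be a divisible abelian group, λ an infinite cardinal with |E| ≤ 2^λ, and p a prime number. Then there exists a group homomorphism φ : ℤ_p^{ω₁ × λ} → E (where ℤ_p^{ω₁ × λ} is the product of copies of the p-adic integers indexed by ω₁ × λ, carrying the product topology) such that: (a) for every x ∈ E, the fiber φ⁻¹(x) is Gδ-dense in ℤ_p^{ω₁ × λ}; (b) for every abelian topological group C and every group homomorphism ψ : C → E, the pullback {(z, c) ∈ ℤ_p^{ω₁ × λ} × C : φ(z) = ψ(c)} is Gδ-dense in the product space ℤ_p^{ω₁ × λ} × C. -/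
/-!
A divisible group `E` is injective, so homomorphisms into it extend along every embedding.
`ℤ_p^λ` is torsion-free of cardinality `2^λ`, so it contains an independent set of size at least
`|E|`; sending it onto `E` and extending gives a surjection `f : ℤ_p^λ → E`. Extending the
direct sum of `ω₁` copies of `f` gives `φ : ℤ_p^{ω₁ × λ} → E` which is onto on every column
`{α} × λ`. A nonempty Gδ-set in a product depends on only countably many coordinates, which miss
some column `α`; changing a point of the Gδ-set on that column moves its `φ`-value anywhere.
-/

open Set Topology

universe u

def GdeltaDense {X : Type u} [TopologicalSpace X] (S : Set X) : Prop :=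
  ∀ A : Set X, IsGδ A → A.Nonempty → (S ∩ A).Nonempty

open Cardinal Function

theorem IsGδ.exists_countable_forall_eq_mem {β : Type*} {X : β → Type*}
    [∀ i, TopologicalSpace (X i)] {A : Set (∀ i, X i)} (hA : IsGδ A) {z₀ : ∀ i, X i}
    (hz₀ : z₀ ∈ A) : ∃ S : Set β, S.Countable ∧ ∀ z, (∀ i ∈ S, z i = z₀ i) → z ∈ A := by
  obtain ⟨T, hTopen, hTc, rfl⟩ := hA
  have := hTc.to_subtype
  choose F u hFu hsub using fun t : T => isOpen_pi_iff.mp (hTopen t t.2) z₀ (hz₀ t t.2)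
  refine ⟨⋃ t, (F t : Set β), countable_iUnion fun t => (F t).countable_toSet, fun z hz t ht => ?_⟩
  refine hsub ⟨t, ht⟩ fun i hi => ?_
  rw [hz i (mem_iUnion.mpr ⟨⟨t, ht⟩, hi⟩)]
  exact (hFu ⟨t, ht⟩ i hi).2

def SurjOnCountableCylinders {β X E : Type*} (φ : (β → X) → E) : Prop :=
  ∀ S : Set β, S.Countable → ∀ (z₀ : β → X) (x : E), ∃ z, (∀ i ∈ S, z i = z₀ i) ∧ φ z = x

namespace SurjOnCountableCylinders

variable {β X E : Type*} [TopologicalSpace X] {φ : (β → X) → E}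

theorem gdeltaDense_preimage_singleton (hφ : SurjOnCountableCylinders φ) (x : E) :
    GdeltaDense (φ ⁻¹' {x}) := by
  rintro A hA ⟨z₀, hz₀⟩
  obtain ⟨S, hS, hSA⟩ := hA.exists_countable_forall_eq_mem hz₀
  obtain ⟨z, hzS, hzx⟩ := hφ S hS z₀ x
  exact ⟨z, hzx, hSA z hzS⟩

theorem gdeltaDense_setOf_eq (hφ : SurjOnCountableCylinders φ) {C : Type*} [TopologicalSpace C]
    (ψ : C → E) : GdeltaDense {zc : (β → X) × C | φ zc.1 = ψ zc.2} := by
  rintro A hA ⟨⟨z₀, c₀⟩, hz₀⟩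
  have hA₀ : IsGδ ((·, c₀) ⁻¹' A : Set (β → X)) :=
    hA.preimage (continuous_id.prodMk continuous_const)
  obtain ⟨S, hS, hSA⟩ := hA₀.exists_countable_forall_eq_mem (show (z₀, c₀) ∈ A from hz₀)
  obtain ⟨z, hzS, hzx⟩ := hφ S hS z₀ (ψ c₀)
  exact ⟨(z, c₀), hzx, hSA z hzS⟩

end SurjOnCountableCylinders

/-- A `ℚ`-basis of the span of `range ρ` chosen inside `range ρ` pulls back to such a set. -/
theorem exists_linearIndepOn_of_aleph0_lt_mk {M V : Type u} [AddCommGroup M] [AddCommGroup V]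
    [Module ℚ V] {ρ : M →+ V} (hρ : Injective ρ) (hM : ℵ₀ < #M) :
    ∃ s : Set M, #M ≤ #s ∧ LinearIndepOn ℤ id s := by
  obtain ⟨s₀, hs₀ρ, hs₀span, hs₀⟩ := exists_linearIndependent ℚ (range ρ)
  have hMW : #M ≤ #(Submodule.span ℚ s₀) :=
    mk_le_of_injective (f := fun m => ⟨ρ m, hs₀span ▸ Submodule.subset_span ⟨m, rfl⟩⟩)
      fun _ _ h => hρ (congrArg Subtype.val h)
  have hW : #(Submodule.span ℚ s₀) = #s₀ := by
    rw [← Module.Free.rank_eq_mk_of_infinite_lt ℚ _ (by simpa using hM.trans_le hMW),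
      rank_span_set hs₀]
  refine ⟨ρ ⁻¹' s₀, ?_, ?_⟩
  · rwa [mk_preimage_of_injective_of_subset_range ρ s₀ hρ hs₀ρ, ← hW]
  · refine LinearIndepOn.of_comp ρ.toIntLinearMap ((linearIndepOn_iff_image hρ.injOn).mpr ?_)
    rw [image_preimage_eq_of_subset hs₀ρ]
    exact hs₀.restrict_scalars' ℤ

theorem two_pow_mk_le_mk_pi (ι R : Type u) [Nontrivial R] : 2 ^ #ι ≤ #(ι → R) := by
  rw [← power_def]
  exact power_le_power_right (two_le_iff.mpr (exists_pair_ne R))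

namespace Module.Baer

variable {E : Type*} [AddCommGroup E]

theorem of_forall_exists_nsmul_eq (hdiv : ∀ (x : E) (n : ℕ), 0 < n → ∃ y : E, n • y = x) :
    Module.Baer ℤ E :=
  letI : DivisibleBy E ℕ := divisibleByOfSMulRightSurj E ℕ fun hn x =>
    hdiv x _ (Nat.pos_of_ne_zero hn)
  letI := AddGroup.divisibleByIntOfDivisibleByNat E
  of_divisible E

theorem exists_surjective_of_linearIndepOn {M E : Type u} [AddCommGroup M] [AddCommGroup E]
    (hE : Module.Baer ℤ E) {s : Set M} (hs : LinearIndepOn ℤ id s) (hEs : #E ≤ #s) :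
    ∃ f : M →ₗ[ℤ] E, Surjective f := by
  obtain ⟨j⟩ := hEs
  let b := Basis.span hs
  obtain ⟨f, hf⟩ := hE.extension_property (Submodule.span ℤ (range _)).subtype
    Subtype.val_injective (b.constr ℤ (invFun j))
  refine ⟨f, fun x => ⟨j x, ?_⟩⟩
  have hfx := LinearMap.congr_fun hf (b (j x))
  rw [b.constr_basis, leftInverse_invFun j.injective] at hfx
  rwa [LinearMap.comp_apply, Submodule.subtype_apply, Basis.span_apply hs] at hfx

theorem exists_addMonoidHom_pi_comp_single (hE : Module.Baer ℤ E) {Ω : Type*} [DecidableEq Ω]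
    {M : Ω → Type*} [∀ α, AddCommGroup (M α)] (f : ∀ α, M α →+ E) :
    ∃ φ : (∀ α, M α) →+ E, ∀ α, φ.comp (AddMonoidHom.single M α) = f α := by
  obtain ⟨φ, hφ⟩ := hE.extension_property_addMonoidHom DFinsupp.coeFnAddMonoidHom
    DFunLike.coe_injective (DFinsupp.liftAddHom f)
  refine ⟨φ, fun α => AddMonoidHom.ext fun w => ?_⟩
  simpa [DFinsupp.single_eq_pi_single] using DFunLike.congr_fun hφ (DFinsupp.single α w)

theorem exists_surjOnCountableCylinders (hE : Module.Baer ℤ E) {Ω ι R : Type*} [Uncountable Ω]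
    [AddCommGroup R] {f : (ι → R) →+ E} (hf : Surjective f) :
    ∃ φ : (Ω × ι → R) →+ E, SurjOnCountableCylinders φ := by
  classical
  obtain ⟨φ₀, hφ₀⟩ := hE.exists_addMonoidHom_pi_comp_single fun _ : Ω => f
  let curryHom : (Ω × ι → R) →+ (Ω → ι → R) := AddMonoidHom.mk' curry fun _ _ => rfl
  refine ⟨φ₀.comp curryHom, fun S hS z₀ x => ?_⟩
  obtain ⟨α, hα⟩ := (ne_univ_iff_exists_notMem (Prod.fst '' S)).mp
    fun h => not_countable_univ (h ▸ hS.image Prod.fst)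
  obtain ⟨w, hw⟩ := hf (x - φ₀ (curry z₀))
  refine ⟨z₀ + uncurry (Pi.single α w), fun q hq => ?_, ?_⟩
  · have hqα : q.1 ≠ α := fun h => hα ⟨q, hq, h⟩
    simp [uncurry, Pi.single_eq_of_ne hqα]
  · have hφ₀w : φ₀ (Pi.single α w) = f w := DFunLike.congr_fun (hφ₀ α) w
    change φ₀ (curry z₀ + Pi.single α w) = x
    rw [map_add, hφ₀w, hw, add_sub_cancel]

end Module.Baer

/-- Let `E` be a divisible abelian group with `|E| ≤ 2^λ` for an infinite cardinal `λ`
(realized by an infinite index type `ι`), and let `p` be a prime. Then there is a group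
homomorphism `φ : ℤ_p^{ω₁ × λ} → E` such that (a) every fiber of `φ` is Gδ-dense in
`ℤ_p^{ω₁ × λ}`, and (b) for every abelian topological group `C` and every group homomorphism
`ψ : C → E`, the pullback `{(z, c) | φ z = ψ c}` is Gδ-dense in `ℤ_p^{ω₁ × λ} × C`.
Here `ω₁` is realized as `(Cardinal.aleph 1).out`, a type of cardinality `ℵ₁`. -/
theorem exists_hom_with_gdelta_dense_fibers
    (E : Type) [AddCommGroup E]
    (hdiv : ∀ (x : E) (n : ℕ), 0 < n → ∃ y : E, n • y = x)
    (ι : Type) [Infinite ι]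
    (hcard : Cardinal.mk E ≤ 2 ^ Cardinal.mk ι)
    (p : ℕ) [Fact p.Prime] :
    ∃ φ : (((Cardinal.aleph 1).out × ι → ℤ_[p]) →+ E),
      (∀ x : E, GdeltaDense (⇑φ ⁻¹' {x})) ∧
      (∀ (C : Type) [AddCommGroup C] [TopologicalSpace C] [IsTopologicalAddGroup C],
        ∀ ψ : C →+ E,
          GdeltaDense {zc : ((Cardinal.aleph 1).out × ι → ℤ_[p]) × C |
            φ zc.1 = ψ zc.2}) := by
  have hE := Module.Baer.of_forall_exists_nsmul_eq hdiv
  have h2ι : 2 ^ #ι ≤ #(ι → ℤ_[p]) := two_pow_mk_le_mk_pi ι ℤ_[p]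
  have hZp : ℵ₀ < #(ι → ℤ_[p]) := ((aleph0_le_mk ι).trans_lt (cantor _)).trans_le h2ι
  have hcoe : Injective ((PadicInt.Coe.ringHom (p := p)).toAddMonoidHom.compLeft ι) :=
    Subtype.val_injective.comp_left
  obtain ⟨s, hs, hli⟩ := exists_linearIndepOn_of_aleph0_lt_mk hcoe hZp
  obtain ⟨f, hf⟩ := hE.exists_surjective_of_linearIndepOn hli (hcard.trans (h2ι.trans hs))
  have : Uncountable (aleph 1).out :=
    aleph0_lt_mk_iff.mp (by rw [mk_out]; exact aleph0_lt_aleph_one)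
  obtain ⟨φ, hφ⟩ :=
    hE.exists_surjOnCountableCylinders (Ω := (aleph 1).out) (f := f.toAddMonoidHom) hf
  exact ⟨φ, hφ.gdeltaDense_preimage_singleton, fun C _ _ _ ψ => hφ.gdeltaDense_setOf_eq ψ⟩
end
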